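/- arXiv:2309.04339 — 9 statements merged into one kernel-verified Lean document; each statement's English description precedes it below -/
import Mathlib

section
/- Let n and T be positive integers, let X ⊆ {0,1}^n be a nonempty finite set, and let Y = conv(X) ⊆ [0,1]^n be its convex hull. Let α ∈ (0,1]. For each t ∈ {1,…,T} let f_t : {0,1}^n → ℝ be nonnegative, let f̃_t : Y → ℝ be continuous, and suppose f̃_t(x) ≥ f_t(x) for every x ∈ X. Let (Ω, μ) be a probability space, and for each t let y_t ∈ Y and let x_t : Ω → X be a measurable map satisfying ∫_Ω f_t(x_t(ω)) dμ(ω) ≥ α · f̃_t(y_t). Then α · max_{x ∈ X} Σ_{t=1}^T f_t(x) − ∫_Ω Σ_{t=1}^T f_t(x_t(ω)) dμ(ω) ≤ α · ( max_{y ∈ Y} Σ_{t=1}^T f̃_t(y) − Σ_{t=1}^T f̃_t(y_t) ). -/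
open MeasureTheory

/-! The comparator `x ↦ ∑ f_t x` is dominated pointwise on `X` by `z ↦ ∑ f̃_t z`, and `X ⊆ conv X`,
so `max_X ∑ f_t ≤ max_Y ∑ f̃_t`; summing the rounding guarantees over `t` gives
`α ∑ f̃_t(y_t) ≤ 𝔼 ∑ f_t(x_t)`. Subtracting the second inequality from `α` times the first is
the claim. Integrability is automatic: each `x_t` takes only finitely many values. -/

theorem integrable_comp_of_finite_range {Ω E β : Type*} [MeasurableSpace Ω] [MeasurableSpace E]
    [MeasurableSingletonClass E] [NormedAddCommGroup β] {μ : Measure Ω} [IsFiniteMeasure μ]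
    {g : Ω → E} (hg : Measurable g) (hrange : (Set.range g).Finite) (φ : E → β) :
    Integrable (fun ω => φ (g ω)) μ := by
  have : Finite (Set.range g) := hrange
  have hg' : Measurable (Set.rangeFactorization g) := hg.subtype_mk
  exact (Integrable.of_finite (f := fun e : Set.range g => φ e)).comp_measurable hg'

theorem csSup_image_le_csSup_image {α β : Type*} [ConditionallyCompleteLattice β]
    {f g : α → β} {s t : Set α} (hs : s.Nonempty) (hst : s ⊆ t) (hg : BddAbove (g '' t))
    (hfg : ∀ x ∈ s, f x ≤ g x) : sSup (f '' s) ≤ sSup (g '' t) :=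
  csSup_le (hs.image f) <| Set.forall_mem_image.2 fun x hx =>
    (hfg x hx).trans (le_csSup hg (Set.mem_image_of_mem g (hst hx)))

theorem sum_le_integral_sum {Ω ι : Type*} [MeasurableSpace Ω] {μ : Measure Ω} {s : Finset ι}
    {a : ι → ℝ} {F : ι → Ω → ℝ} (hF : ∀ i ∈ s, Integrable (F i) μ)
    (h : ∀ i ∈ s, a i ≤ ∫ ω, F i ω ∂μ) : ∑ i ∈ s, a i ≤ ∫ ω, ∑ i ∈ s, F i ω ∂μ := by
  rw [integral_finsetSum s hF]
  exact Finset.sum_le_sum h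

theorem osm_to_oco_static_general
    (n T : ℕ)
    (X : Finset (Fin n → ℝ)) (hXne : X.Nonempty)
    (α : ℝ) (hα0 : 0 < α)
    (f : ℕ → (Fin n → ℝ) → ℝ)
    (ftil : ℕ → (Fin n → ℝ) → ℝ)
    (hftilcont : ∀ t, ContinuousOn (ftil t) (convexHull ℝ (X : Set (Fin n → ℝ))))
    (hsandwich : ∀ t, ∀ x ∈ X, f t x ≤ ftil t x)
    (Ω : Type*) [MeasurableSpace Ω] (μ : Measure Ω) [IsProbabilityMeasure μ]
    (y : ℕ → (Fin n → ℝ))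
    (xt : ℕ → Ω → (Fin n → ℝ)) (hxtmeas : ∀ t, Measurable (xt t))
    (hxtX : ∀ t ω, xt t ω ∈ X)
    (hround : ∀ t, α * ftil t (y t) ≤ ∫ ω, f t (xt t ω) ∂μ) :
    α * sSup ((fun x => ∑ t ∈ Finset.range T, f t x) '' (X : Set (Fin n → ℝ)))
        - ∫ ω, ∑ t ∈ Finset.range T, f t (xt t ω) ∂μ
      ≤ α * (sSup ((fun z => ∑ t ∈ Finset.range T, ftil t z) ''
              (convexHull ℝ (X : Set (Fin n → ℝ))))
            - ∑ t ∈ Finset.range T, ftil t (y t)) := by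
  have hbdd : BddAbove ((fun z => ∑ t ∈ Finset.range T, ftil t z) ''
      convexHull ℝ (X : Set (Fin n → ℝ))) :=
    ((X.finite_toSet.isCompact_convexHull (𝕜 := ℝ)).image_of_continuousOn
      (continuousOn_finsetSum _ fun t _ => hftilcont t)).bddAbove
  have hmax := csSup_image_le_csSup_image (f := fun x => ∑ t ∈ Finset.range T, f t x)
    (Finset.coe_nonempty.2 hXne) (subset_convexHull ℝ _) hbdd
    fun x hx => Finset.sum_le_sum fun t _ => hsandwich t x hx
  have hexp : ∑ t ∈ Finset.range T, α * ftil t (y t)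
      ≤ ∫ ω, ∑ t ∈ Finset.range T, f t (xt t ω) ∂μ :=
    sum_le_integral_sum (fun t _ => integrable_comp_of_finite_range (hxtmeas t)
      (X.finite_toSet.subset (Set.range_subset_iff.2 (hxtX t))) (f t)) fun t _ => hround t
  rw [← Finset.mul_sum] at hexp
  linarith [mul_le_mul_of_nonneg_left hmax hα0.le]

/-- Static reduction of online submodular maximization to OCO (paper's Theorem 2):
under the sandwich property, the α-regret on the combinatorial domain `X` is at most
`α` times the regret of the fractional policy on `Y = conv X`. -/
theorem osm_to_oco_static
    (n T : ℕ) (hn : 0 < n) (hT : 0 < T)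
    (X : Finset (Fin n → ℝ)) (hXne : X.Nonempty)
    (hX01 : ∀ x ∈ X, ∀ i, x i = 0 ∨ x i = 1)
    (α : ℝ) (hα0 : 0 < α) (hα1 : α ≤ 1)
    (f : ℕ → (Fin n → ℝ) → ℝ)
    (hfnonneg : ∀ t, ∀ x : Fin n → ℝ, (∀ i, x i = 0 ∨ x i = 1) → 0 ≤ f t x)
    (ftil : ℕ → (Fin n → ℝ) → ℝ)
    (hftilcont : ∀ t, ContinuousOn (ftil t) (convexHull ℝ (X : Set (Fin n → ℝ))))
    (hsandwich : ∀ t, ∀ x ∈ X, f t x ≤ ftil t x)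
    (Ω : Type*) [MeasurableSpace Ω] (μ : Measure Ω) [IsProbabilityMeasure μ]
    (y : ℕ → (Fin n → ℝ)) (hy : ∀ t, y t ∈ convexHull ℝ (X : Set (Fin n → ℝ)))
    (xt : ℕ → Ω → (Fin n → ℝ)) (hxtmeas : ∀ t, Measurable (xt t))
    (hxtX : ∀ t ω, xt t ω ∈ X)
    (hround : ∀ t, α * ftil t (y t) ≤ ∫ ω, f t (xt t ω) ∂μ) :
    α * sSup ((fun x => ∑ t ∈ Finset.range T, f t x) '' (X : Set (Fin n → ℝ)))
        - ∫ ω, ∑ t ∈ Finset.range T, f t (xt t ω) ∂μ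
      ≤ α * (sSup ((fun z => ∑ t ∈ Finset.range T, ftil t z) ''
              (convexHull ℝ (X : Set (Fin n → ℝ))))
            - ∑ t ∈ Finset.range T, ftil t (y t)) :=
  osm_to_oco_static_general n T X hXne α hα0 f ftil hftilcont hsandwich Ω μ y xt hxtmeas hxtX hround
end

section
/- Let n and T be positive integers, let X ⊆ {0,1}^n be a nonempty finite set, let Y = conv(X) ⊆ [0,1]^n be its convex hull, let ‖·‖ be a norm on ℝ^n, and let P_T ≥ 0, α ∈ (0,1]. For each t ∈ {1,…,T} let f_t : {0,1}^n → ℝ be nonnegative, let f̃_t : Y → ℝ be continuous with f̃_t(x) ≥ f_t(x) for every x ∈ X, let (Ω, μ) be a probability space, y_t ∈ Y, and let x_t : Ω → X be measurable with ∫_Ω f_t(x_t(ω)) dμ(ω) ≥ α · f̃_t(y_t). Then α · sup { Σ_{t=1}^T f_t(x*_t) : (x*_1,…,x*_T) ∈ X^T, Σ_{t=1}^{T−1} ‖x*_{t+1} − x*_t‖ ≤ P_T } − ∫_Ω Σ_{t=1}^T f_t(x_t(ω)) dμ(ω) ≤ α · ( sup { Σ_{t=1}^T f̃_t(y*_t)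 : (y*_1,…,y*_T) ∈ Y^T, Σ_{t=1}^{T−1} ‖y*_{t+1} − y*_t‖ ≤ P_T } − Σ_{t=1}^T f̃_t(y_t) ). -/
/-!
Each rounded point earns, in expectation, at least `α` times the fractional reward of the point it
rounds, so the expected total reward is at least `α` times the fractional total reward. On the
comparator side every integral sequence of path length at most `P` is also a fractional one, on
which `f̃_t ≥ f_t`, so the discrete benchmark is at most the fractional benchmark; the latter is
finite because each `f̃_t` is continuous on the compact set `conv X`.
-/

open MeasureTheory Finset

section DynamicBenchmark

variable {E : Type*} [AddCommGroup E] [Module ℝ E]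

def pathLength (N : Seminorm ℝ E) (T : ℕ) (xs : ℕ → E) : ℝ :=
  ∑ t ∈ range (T - 1), N (xs (t + 1) - xs t)

noncomputable def dynamicBenchmark (K : Set E) (N : Seminorm ℝ E) (P : ℝ) (T : ℕ)
    (g : ℕ → E → ℝ) : ℝ :=
  sSup {s | ∃ xs : ℕ → E, (∀ t, xs t ∈ K) ∧ pathLength N T xs ≤ P ∧
    s = ∑ t ∈ range T, g t (xs t)}

lemma pathLength_const (N : Seminorm ℝ E) (T : ℕ) (x : E) :
    pathLength N T (fun _ => x) = 0 := by
  simp [pathLength]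

lemma bddAbove_dynamicBenchmark_set {K : Set E} {g : ℕ → E → ℝ}
    (hg : ∀ t, BddAbove (g t '' K)) (N : Seminorm ℝ E) (P : ℝ) (T : ℕ) :
    BddAbove {s | ∃ xs : ℕ → E, (∀ t, xs t ∈ K) ∧ pathLength N T xs ≤ P ∧
      s = ∑ t ∈ range T, g t (xs t)} := by
  choose C hC using hg
  refine ⟨∑ t ∈ range T, C t, ?_⟩
  rintro s ⟨xs, hxs, -, rfl⟩
  exact sum_le_sum fun t _ => hC t ⟨xs t, hxs t, rfl⟩

lemma dynamicBenchmark_mono {K L : Set E} {g h : ℕ → E → ℝ} {N : Seminorm ℝ E} {P : ℝ}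
    (T : ℕ) (hK : K.Nonempty) (hKL : K ⊆ L) (hP : 0 ≤ P)
    (hgh : ∀ t, ∀ x ∈ K, g t x ≤ h t x) (hh : ∀ t, BddAbove (h t '' L)) :
    dynamicBenchmark K N P T g ≤ dynamicBenchmark L N P T h := by
  obtain ⟨x₀, hx₀⟩ := hK
  apply csSup_le
  · exact ⟨_, fun _ => x₀, fun _ => hx₀, (pathLength_const N T x₀).trans_le hP, rfl⟩
  · rintro s ⟨xs, hxs, hpath, rfl⟩
    exact le_csSup_of_le (bddAbove_dynamicBenchmark_set hh N P T)
      ⟨xs, fun t => hKL (hxs t), hpath, rfl⟩ (sum_le_sum fun t _ => hgh t _ (hxs t))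

end DynamicBenchmark

lemma integrable_comp_of_mem_finset {Ω E : Type*} [MeasurableSpace Ω] [MeasurableSpace E]
    [MeasurableSingletonClass E] {μ : Measure Ω} [IsFiniteMeasure μ] {S : Finset E}
    {g : Ω → E} (hg : Measurable g) (hgS : ∀ ω, g ω ∈ S) (φ : E → ℝ) :
    Integrable (fun ω => φ (g ω)) μ := by
  have hg' : Measurable fun ω => (⟨g ω, hgS ω⟩ : S) := hg.subtype_mk
  exact (Integrable.of_finite (f := fun x : S => φ x)).comp_measurable hg'

lemma mul_sum_le_integral_sum {Ω : Type*} [MeasurableSpace Ω] {μ : Measure Ω} {α : ℝ}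
    {a : ℕ → ℝ} {F : ℕ → Ω → ℝ} (T : ℕ) (hF : ∀ t, Integrable (F t) μ)
    (ha : ∀ t, α * a t ≤ ∫ ω, F t ω ∂μ) :
    α * ∑ t ∈ range T, a t ≤ ∫ ω, ∑ t ∈ range T, F t ω ∂μ := by
  rw [integral_finsetSum _ fun t _ => hF t, mul_sum]
  exact sum_le_sum fun t _ => ha t

theorem osm_to_oco_dynamic_general
    (n T : ℕ)
    (X : Finset (Fin n → ℝ)) (hXne : X.Nonempty)
    (N : Seminorm ℝ (Fin n → ℝ))
    (P : ℝ) (hP : 0 ≤ P)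
    (α : ℝ) (hα0 : 0 < α)
    (f : ℕ → (Fin n → ℝ) → ℝ)
    (ftil : ℕ → (Fin n → ℝ) → ℝ)
    (hftilcont : ∀ t, ContinuousOn (ftil t) (convexHull ℝ (X : Set (Fin n → ℝ))))
    (hsandwich : ∀ t, ∀ x ∈ X, f t x ≤ ftil t x)
    (Ω : Type*) [MeasurableSpace Ω] (μ : Measure Ω) [IsProbabilityMeasure μ]
    (y : ℕ → (Fin n → ℝ))
    (xt : ℕ → Ω → (Fin n → ℝ)) (hxtmeas : ∀ t, Measurable (xt t))
    (hxtX : ∀ t ω, xt t ω ∈ X)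
    (hround : ∀ t, α * ftil t (y t) ≤ ∫ ω, f t (xt t ω) ∂μ) :
    α * sSup {s : ℝ | ∃ xs : ℕ → (Fin n → ℝ), (∀ t, xs t ∈ X) ∧
          (∑ t ∈ Finset.range (T - 1), N (xs (t + 1) - xs t)) ≤ P ∧
          s = ∑ t ∈ Finset.range T, f t (xs t)}
        - ∫ ω, ∑ t ∈ Finset.range T, f t (xt t ω) ∂μ
      ≤ α * (sSup {s : ℝ | ∃ ys : ℕ → (Fin n → ℝ),
              (∀ t, ys t ∈ convexHull ℝ (X : Set (Fin n → ℝ))) ∧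
              (∑ t ∈ Finset.range (T - 1), N (ys (t + 1) - ys t)) ≤ P ∧
              s = ∑ t ∈ Finset.range T, ftil t (ys t)}
            - ∑ t ∈ Finset.range T, ftil t (y t)) := by
  set Y := convexHull ℝ (X : Set (Fin n → ℝ))
  have hftilbdd : ∀ t, BddAbove (ftil t '' Y) := fun t =>
    (X.finite_toSet.isCompact_convexHull (𝕜 := ℝ)).bddAbove_image (hftilcont t)
  have hbenchmark : dynamicBenchmark X N P T f ≤ dynamicBenchmark Y N P T ftil :=
    dynamicBenchmark_mono T hXne (subset_convexHull ℝ _) hP hsandwich hftilbdd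
  have hexpected : α * ∑ t ∈ range T, ftil t (y t) ≤ ∫ ω, ∑ t ∈ range T, f t (xt t ω) ∂μ :=
    mul_sum_le_integral_sum T
      (fun t => integrable_comp_of_mem_finset (hxtmeas t) (hxtX t) (f t)) hround
  change α * dynamicBenchmark X N P T f - _ ≤ α * (dynamicBenchmark Y N P T ftil - _)
  linarith [mul_le_mul_of_nonneg_left hbenchmark hα0.le]

/-- Dynamic-regret version of the paper's reduction: the dynamic α-regret on `X` against
comparator sequences of path length at most `P` is bounded by `α` times the dynamic
regret of the fractional policy on `Y = conv X`. -/
theorem osm_to_oco_dynamic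
    (n T : ℕ) (hn : 0 < n) (hT : 0 < T)
    (X : Finset (Fin n → ℝ)) (hXne : X.Nonempty)
    (hX01 : ∀ x ∈ X, ∀ i, x i = 0 ∨ x i = 1)
    (N : Seminorm ℝ (Fin n → ℝ)) (hN : ∀ v, N v = 0 → v = 0)
    (P : ℝ) (hP : 0 ≤ P)
    (α : ℝ) (hα0 : 0 < α) (hα1 : α ≤ 1)
    (f : ℕ → (Fin n → ℝ) → ℝ)
    (hfnonneg : ∀ t, ∀ x : Fin n → ℝ, (∀ i, x i = 0 ∨ x i = 1) → 0 ≤ f t x)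
    (ftil : ℕ → (Fin n → ℝ) → ℝ)
    (hftilcont : ∀ t, ContinuousOn (ftil t) (convexHull ℝ (X : Set (Fin n → ℝ))))
    (hsandwich : ∀ t, ∀ x ∈ X, f t x ≤ ftil t x)
    (Ω : Type*) [MeasurableSpace Ω] (μ : Measure Ω) [IsProbabilityMeasure μ]
    (y : ℕ → (Fin n → ℝ)) (hy : ∀ t, y t ∈ convexHull ℝ (X : Set (Fin n → ℝ)))
    (xt : ℕ → Ω → (Fin n → ℝ)) (hxtmeas : ∀ t, Measurable (xt t))
    (hxtX : ∀ t ω, xt t ω ∈ X)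
    (hround : ∀ t, α * ftil t (y t) ≤ ∫ ω, f t (xt t ω) ∂μ) :
    α * sSup {s : ℝ | ∃ xs : ℕ → (Fin n → ℝ), (∀ t, xs t ∈ X) ∧
          (∑ t ∈ Finset.range (T - 1), N (xs (t + 1) - xs t)) ≤ P ∧
          s = ∑ t ∈ Finset.range T, f t (xs t)}
        - ∫ ω, ∑ t ∈ Finset.range T, f t (xt t ω) ∂μ
      ≤ α * (sSup {s : ℝ | ∃ ys : ℕ → (Fin n → ℝ),
              (∀ t, ys t ∈ convexHull ℝ (X : Set (Fin n → ℝ))) ∧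
              (∑ t ∈ Finset.range (T - 1), N (ys (t + 1) - ys t)) ≤ P ∧
              s = ∑ t ∈ Finset.range T, ftil t (ys t)}
            - ∑ t ∈ Finset.range T, ftil t (y t)) :=
  osm_to_oco_dynamic_general n T X hXne N P hP α hα0 f ftil hftilcont hsandwich Ω μ y xt hxtmeas
    hxtX hround
end

section
/- Let n be a positive integer, b > 0 a real number, y ∈ [0,1]^n, and w ∈ [0,b]^n. Then b − b·Π_{i=1}^n (1 − y_i·w_i/b) ≥ (1 − (1 − 1/n)^n) · min{ b , Σ_{i=1}^n y_i·w_i }. -/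
/-! With `z i = y i * w i / b ∈ [0, 1]` the claim is `b` times the Goemans–Williamson inequality
`(1 - (1 - 1/n)^n) * min 1 (∑ z i) ≤ 1 - ∏ (1 - z i)`. By AM–GM the product is at most
`(1 - S/n)^n` where `S = ∑ z i`, and `S ↦ 1 - (1 - S/n)^n` is concave, vanishes at `0`, takes the
value `1 - (1 - 1/n)^n` at `1`, and is increasing on `[0, n]`. -/

open Finset

lemma prod_le_mean_pow {ι : Type*} (s : Finset ι) (z : ι → ℝ) (hz : ∀ i ∈ s, 0 ≤ z i) :
    ∏ i ∈ s, z i ≤ ((∑ i ∈ s, z i) / #s) ^ #s := by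
  rcases s.eq_empty_or_nonempty with rfl | hs
  · simp
  have hcard : (0 : ℝ) < #s := by exact_mod_cast hs.card_pos
  have hAMGM := Real.geom_mean_le_arith_mean s (fun _ ↦ 1) z (fun _ _ ↦ zero_le_one)
    (by simpa using hcard) hz
  simp only [Real.rpow_one, one_mul, sum_const, nsmul_eq_mul, mul_one] at hAMGM
  calc ∏ i ∈ s, z i = ((∏ i ∈ s, z i) ^ (#s : ℝ)⁻¹) ^ #s :=
        (Real.rpow_inv_natCast_pow (prod_nonneg hz) hs.card_pos.ne').symm
    _ ≤ ((∑ i ∈ s, z i) / #s) ^ #s :=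
        pow_le_pow_left₀ (Real.rpow_nonneg (prod_nonneg hz) _) hAMGM _

lemma one_sub_mul_pow_le (n : ℕ) {a t : ℝ} (ha : a ≤ 1) (ht₀ : 0 ≤ t) (ht₁ : t ≤ 1) :
    (1 - t * a) ^ n ≤ 1 - t + t * (1 - a) ^ n := by
  have h := (convexOn_pow n).2 (Set.mem_Ici.2 zero_le_one) (Set.mem_Ici.2 (sub_nonneg.2 ha))
    (sub_nonneg.2 ht₁) ht₀ (sub_add_cancel 1 t)
  simp only [smul_eq_mul, mul_one, one_pow] at h
  rwa [show (1 - t) + t * (1 - a) = 1 - t * a by ring] at h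

theorem goemans_williamson_inequality {ι : Type*} (s : Finset ι) (z : ι → ℝ)
    (hz : ∀ i ∈ s, z i ∈ Set.Icc (0 : ℝ) 1) :
    (1 - (1 - 1 / (#s : ℝ)) ^ #s) * min 1 (∑ i ∈ s, z i) ≤ 1 - ∏ i ∈ s, (1 - z i) := by
  rcases s.eq_empty_or_nonempty with rfl | hs
  · simp
  set n := #s
  set S := ∑ i ∈ s, z i
  have hn : (0 : ℝ) < n := by exact_mod_cast hs.card_pos
  have hS₀ : 0 ≤ S := sum_nonneg fun i hi ↦ (hz i hi).1
  have hSn : S ≤ n := by simpa using sum_le_card_nsmul s z 1 fun i hi ↦ (hz i hi).2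
  have hAMGM : ∏ i ∈ s, (1 - z i) ≤ (1 - S / n) ^ n := by
    have h := prod_le_mean_pow s (fun i ↦ 1 - z i) fun i hi ↦ sub_nonneg.2 (hz i hi).2
    rwa [sum_sub_distrib, sum_const, nsmul_one, sub_div, div_self hn.ne'] at h
  suffices (1 - S / n) ^ n ≤ 1 - (1 - (1 - 1 / n) ^ n) * min 1 S by linarith
  rcases le_total S 1 with hS₁ | hS₁
  · have h := one_sub_mul_pow_le n ((div_le_one hn).2 (Nat.one_le_cast.2 hs.card_pos)) hS₀ hS₁
    rw [mul_one_div] at h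
    rw [min_eq_right hS₁]
    linarith
  · have h := pow_le_pow_left₀ (sub_nonneg.2 ((div_le_one hn).2 hSn))
      (sub_le_sub_left (div_le_div_of_nonneg_right hS₁ hn.le) 1) n
    rw [min_eq_left hS₁]
    linarith

theorem multilinear_ge_threshold_general
    (n : ℕ) (b : ℝ) (hb : 0 < b)
    (y w : Fin n → ℝ)
    (hy : ∀ i, y i ∈ Set.Icc (0 : ℝ) 1)
    (hw : ∀ i, w i ∈ Set.Icc (0 : ℝ) b) :
    (1 - (1 - 1 / (n : ℝ)) ^ n) * min b (∑ i, y i * w i)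
      ≤ b - b * ∏ i, (1 - y i * w i / b) := by
  have hz : ∀ i ∈ univ, y i * w i / b ∈ Set.Icc (0 : ℝ) 1 := fun i _ ↦
    ⟨div_nonneg (mul_nonneg (hy i).1 (hw i).1) hb.le,
      (div_le_one hb).2 ((mul_le_of_le_one_left (hw i).1 (hy i).2).trans (hw i).2)⟩
  have key := goemans_williamson_inequality univ _ hz
  rw [card_univ, Fintype.card_fin, ← sum_div] at key
  calc (1 - (1 - 1 / (n : ℝ)) ^ n) * min b (∑ i, y i * w i)
      = b * ((1 - (1 - 1 / (n : ℝ)) ^ n) * min 1 ((∑ i, y i * w i) / b)) := by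
        rw [mul_left_comm, mul_min_of_nonneg _ _ hb.le, mul_one, mul_div_cancel₀ _ hb.ne']
    _ ≤ b * (1 - ∏ i, (1 - y i * w i / b)) := by gcongr
    _ = b - b * ∏ i, (1 - y i * w i / b) := by ring

/-- Weighted Goemans–Williamson-type inequality (Appendix E of the paper). -/
theorem multilinear_ge_threshold
    (n : ℕ) (hn : 0 < n) (b : ℝ) (hb : 0 < b)
    (y w : Fin n → ℝ)
    (hy : ∀ i, y i ∈ Set.Icc (0 : ℝ) 1)
    (hw : ∀ i, w i ∈ Set.Icc (0 : ℝ) b) :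
    (1 - (1 - 1 / (n : ℝ)) ^ n) * min b (∑ i, y i * w i)
      ≤ b - b * ∏ i, (1 - y i * w i / b) :=
  multilinear_ge_threshold_general n b hb y w hy hw
end

section
/- Let (Ω, F, μ) be a probability space, let n be a positive integer, and let x_1,…,x_n : Ω → {0,1} be random variables with expectations E[x_i] = y_i. Suppose the complements are upper negatively correlated, i.e., for every subset S ⊆ {1,…,n}, E[ Π_{i∈S} (1 − x_i) ] ≤ Π_{i∈S} (1 − y_i). Then for every vector of weights w ∈ [0,1]^n and every subset S ⊆ {1,…,n}, E[ Π_{i∈S} (1 − w_i·x_i) ] ≤ Π_{i∈S} (1 − w_i·y_i). -/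
/-!
Writing `1 - w x = w (1 - x) + (1 - w)` and expanding the product over `S` expresses
`∏_{i∈S} (1 - w_i x_i)` as a combination of the complement products `∏_{i∈T} (1 - x_i)`,
`T ⊆ S`, with the nonnegative coefficients `∏_{i∈T} w_i ∏_{i∈S∖T} (1 - w_i)`. Taking
expectations and applying the hypothesis to each `T` gives the same combination of the
`∏_{i∈T} (1 - y_i)`, which the same expansion read backwards resums to `∏_{i∈S} (1 - w_i y_i)`.
-/

open MeasureTheory

theorem Finset.prod_one_sub_mul_eq_sum_powerset {ι R : Type*} [CommRing R] [DecidableEq ι]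
    (S : Finset ι) (w a : ι → R) :
    ∏ i ∈ S, (1 - w i * a i) =
      ∑ T ∈ S.powerset, (∏ i ∈ T, w i) * (∏ i ∈ T, (1 - a i)) * ∏ i ∈ S \ T, (1 - w i) := by
  calc ∏ i ∈ S, (1 - w i * a i) = ∏ i ∈ S, (w i * (1 - a i) + (1 - w i)) :=
        Finset.prod_congr rfl fun i _ => by ring
    _ = _ := by simp only [Finset.prod_add, Finset.prod_mul_distrib]

theorem integrable_prod_one_sub {Ω ι : Type*} [MeasurableSpace Ω] (μ : Measure Ω)
    [IsFiniteMeasure μ] {x : ι → Ω → ℝ} (hmeas : ∀ i, Measurable (x i))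
    (hx : ∀ i ω, x i ω ∈ Set.Icc (0 : ℝ) 1) (T : Finset ι) :
    Integrable (fun ω => ∏ i ∈ T, (1 - x i ω)) μ := by
  refine Integrable.of_bound
    (Finset.measurable_prod T fun i _ => measurable_const.sub (hmeas i)).aestronglyMeasurable
    1 (ae_of_all _ fun ω => ?_)
  rw [norm_prod]
  refine Finset.prod_le_one (fun _ _ => norm_nonneg _) fun i _ => ?_
  obtain ⟨h0, h1⟩ := hx i ω
  rw [Real.norm_eq_abs, abs_le]
  constructor <;> linarith

theorem weighted_negative_correlation_general
    (Ω : Type*) [MeasurableSpace Ω] (μ : Measure Ω) [IsProbabilityMeasure μ]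
    (n : ℕ)
    (x : Fin n → Ω → ℝ) (hmeas : ∀ i, Measurable (x i))
    (hbin : ∀ i ω, x i ω = 0 ∨ x i ω = 1)
    (y : Fin n → ℝ)
    (hneg : ∀ S : Finset (Fin n),
      (∫ ω, ∏ i ∈ S, (1 - x i ω) ∂μ) ≤ ∏ i ∈ S, (1 - y i))
    (w : Fin n → ℝ) (hw : ∀ i, w i ∈ Set.Icc (0 : ℝ) 1)
    (S : Finset (Fin n)) :
    (∫ ω, ∏ i ∈ S, (1 - w i * x i ω) ∂μ) ≤ ∏ i ∈ S, (1 - w i * y i) := by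
  have hx : ∀ i ω, x i ω ∈ Set.Icc (0 : ℝ) 1 := fun i ω => by
    rcases hbin i ω with h | h <;> simp [h]
  simp_rw [Finset.prod_one_sub_mul_eq_sum_powerset S w]
  rw [integral_finsetSum _ fun T _ =>
    ((integrable_prod_one_sub μ hmeas hx T).const_mul _).mul_const _]
  refine Finset.sum_le_sum fun T _ => ?_
  rw [integral_mul_const, integral_const_mul]
  have hwT : 0 ≤ ∏ i ∈ T, w i := Finset.prod_nonneg fun i _ => (hw i).1
  have hwST : 0 ≤ ∏ i ∈ S \ T, (1 - w i) :=
    Finset.prod_nonneg fun i _ => sub_nonneg.2 (hw i).2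
  gcongr
  exact hneg T

/-- Weighted negative correlation (Appendix E of the paper): if `{0,1}`-valued random
variables have negatively correlated complements, the weighted variables `w i * x i`
inherit the product-expectation inequality. -/
theorem weighted_negative_correlation
    (Ω : Type*) [MeasurableSpace Ω] (μ : Measure Ω) [IsProbabilityMeasure μ]
    (n : ℕ) (hn : 0 < n)
    (x : Fin n → Ω → ℝ) (hmeas : ∀ i, Measurable (x i))
    (hbin : ∀ i ω, x i ω = 0 ∨ x i ω = 1)
    (y : Fin n → ℝ) (hy : ∀ i, (∫ ω, x i ω ∂μ) = y i)
    (hneg : ∀ S : Finset (Fin n),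
      (∫ ω, ∏ i ∈ S, (1 - x i ω) ∂μ) ≤ ∏ i ∈ S, (1 - y i))
    (w : Fin n → ℝ) (hw : ∀ i, w i ∈ Set.Icc (0 : ℝ) 1)
    (S : Finset (Fin n)) :
    (∫ ω, ∏ i ∈ S, (1 - w i * x i ω) ∂μ) ≤ ∏ i ∈ S, (1 - w i * y i) :=
  weighted_negative_correlation_general Ω μ n x hmeas hbin y hneg w hw S
end

section
/- Let n ≥ 1 and r be integers with 1 ≤ r ≤ n, and let γ > 0. Then for every y ∈ [0,1]^n with Σ_{i=1}^n y_i = r, Σ_{i=1}^n (y_i + γ) · log( (y_i + γ) / (r/n + γ) ) ≤ r·(1 + γ) · log( (1 + γ)·n / (r + γ·n) ). -/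
/-! With `c = r / n + γ`, each summand is `φ (y i + γ)` for the convex `φ x = x log (x / c)`,
so it lies below the chord of `φ` over `[γ, 1 + γ]`. Summing the chords with `∑ y i = r` bounds
the left side by `(n - r) φ γ + r φ (1 + γ)`, its value at a 0/1 vertex, and `φ γ ≤ 0` since
`γ ≤ c`. -/

open Real Set Finset

lemma convexOn_mul_log_div {c : ℝ} (hc : c ≠ 0) :
    ConvexOn ℝ (Ici 0) fun x ↦ x * log (x / c) := by
  have hlin := ((-log c) • LinearMap.id : ℝ →ₗ[ℝ] ℝ).convexOn (convex_Ici 0)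
  refine (convexOn_mul_log.add hlin).congr fun x _ ↦ ?_
  rcases eq_or_ne x 0 with rfl | hx
  · simp
  · simp [log_div hx hc]
    ring

lemma ConvexOn.sum_le_of_mem_unitInterval {ι : Type*} [Fintype ι] {f : ℝ → ℝ} {a : ℝ}
    (hf : ConvexOn ℝ (Icc a (1 + a)) f) {y : ι → ℝ} (hy : ∀ i, y i ∈ Icc (0 : ℝ) 1) :
    ∑ i, f (y i + a) ≤ (Fintype.card ι - ∑ i, y i) * f a + (∑ i, y i) * f (1 + a) := by
  have chord (i : ι) : f (y i + a) ≤ (1 - y i) * f a + y i * f (1 + a) := by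
    calc f (y i + a) = f ((1 - y i) • a + y i • (1 + a)) := by
          simp only [smul_eq_mul]
          ring_nf
      _ ≤ (1 - y i) • f a + y i • f (1 + a) :=
          hf.2 (left_mem_Icc.2 (by linarith)) (right_mem_Icc.2 (by linarith))
            (sub_nonneg.2 (hy i).2) (hy i).1 (sub_add_cancel 1 (y i))
  calc ∑ i, f (y i + a) ≤ ∑ i, ((1 - y i) * f a + y i * f (1 + a)) :=
        sum_le_sum fun i _ ↦ chord i
    _ = _ := by simp [sum_add_distrib, ← sum_mul]

theorem shifted_entropy_bregman_bound_general
    (n r : ℕ) (hn : 1 ≤ n) (hrn : r ≤ n) (γ : ℝ) (hγ : 0 < γ)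
    (y : Fin n → ℝ) (hy : ∀ i, y i ∈ Set.Icc (0 : ℝ) 1)
    (hsum : ∑ i, y i = (r : ℝ)) :
    ∑ i, (y i + γ) * Real.log ((y i + γ) / ((r : ℝ) / (n : ℝ) + γ))
      ≤ (r : ℝ) * (1 + γ) * Real.log ((1 + γ) * (n : ℝ) / ((r : ℝ) + γ * (n : ℝ))) := by
  have hn₀ : (0 : ℝ) < n := by exact_mod_cast hn
  set c : ℝ := r / n + γ
  have hγc : γ ≤ c := le_add_of_nonneg_left (by positivity)
  have hφ : ConvexOn ℝ (Icc γ (1 + γ)) fun x ↦ x * log (x / c) :=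
    (convexOn_mul_log_div (by positivity)).subset
      (Icc_subset_Ici_self.trans (Ici_subset_Ici.2 hγ.le)) (convex_Icc _ _)
  have hφγ : γ * log (γ / c) ≤ 0 :=
    mul_nonpos_of_nonneg_of_nonpos hγ.le
      (log_nonpos (by positivity) ((div_le_one (by positivity)).2 hγc))
  have hrn' : (r : ℝ) ≤ n := by exact_mod_cast hrn
  have hc : (1 + γ) * n / (r + γ * n) = (1 + γ) / c := by
    simp only [c]
    field_simp
  calc ∑ i, (y i + γ) * log ((y i + γ) / c)
      ≤ (n - r) * (γ * log (γ / c)) + r * ((1 + γ) * log ((1 + γ) / c)) := by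
        simpa only [hsum, Fintype.card_fin] using hφ.sum_le_of_mem_unitInterval hy
    _ ≤ r * ((1 + γ) * log ((1 + γ) / c)) :=
        add_le_of_nonpos_left (mul_nonpos_of_nonneg_of_nonpos (sub_nonneg.2 hrn') hφγ)
    _ = r * (1 + γ) * log ((1 + γ) * n / (r + γ * n)) := by rw [hc, mul_assoc]

/-- Bregman divergence bound for the shifted negative entropy mirror map on the base
polytope of a rank-`r` matroid (Appendix C of the paper). -/
theorem shifted_entropy_bregman_bound
    (n r : ℕ) (hn : 1 ≤ n) (hr1 : 1 ≤ r) (hrn : r ≤ n) (γ : ℝ) (hγ : 0 < γ)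
    (y : Fin n → ℝ) (hy : ∀ i, y i ∈ Set.Icc (0 : ℝ) 1)
    (hsum : ∑ i, y i = (r : ℝ)) :
    ∑ i, (y i + γ) * Real.log ((y i + γ) / ((r : ℝ) / (n : ℝ) + γ))
      ≤ (r : ℝ) * (1 + γ) * Real.log ((1 + γ) * (n : ℝ) / ((r : ℝ) + γ * (n : ℝ))) :=
  shifted_entropy_bregman_bound_general n r hn hrn γ hγ y hy hsum
end

section
/- For every real η > 0 and every even integer T ≥ 2, Σ_{t=1}^{T/2} e^{(t−1)η}/(e^{(t−1)η} + 1) + Σ_{t=T/2+1}^{T} e^{(t−1−T/2)η}/( e^{(t−1−T/2)η} + e^{(T/2−1)η} ) ≤ (3/4)·T, and consequently T minus this sum is at least T/4. -/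
open Finset Real

section Ratio

variable {α : Type*} [Field α] [LinearOrder α] [IsStrictOrderedRing α]

theorem div_add_le_one_of_nonneg {a b : α} (ha : 0 ≤ a) (hb : 0 ≤ b) : a / (a + b) ≤ 1 :=
  div_le_one_of_le₀ (le_add_of_nonneg_right hb) (add_nonneg ha hb)

theorem div_add_le_half_of_le {a b : α} (ha : 0 ≤ a) (hab : a ≤ b) : a / (a + b) ≤ 1 / 2 := by
  rcases ha.eq_or_lt with rfl | ha
  · simp
  · rw [div_le_iff₀ (by linarith)]
    linarith

end Ratio

theorem sum_exp_div_exp_add_one_le (η : ℝ) (n : ℕ) :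
    ∑ t ∈ range n, exp ((t : ℝ) * η) / (exp ((t : ℝ) * η) + 1) ≤ n := by
  simpa using sum_le_card_nsmul (range n) _ 1 fun t _ =>
    div_add_le_one_of_nonneg (exp_pos ((t : ℝ) * η)).le zero_le_one

theorem sum_exp_div_exp_add_exp_last_le {η : ℝ} (hη : 0 ≤ η) (n : ℕ) :
    ∑ t ∈ range n, exp ((t : ℝ) * η) / (exp ((t : ℝ) * η) + exp (((n - 1 : ℕ) : ℝ) * η))
      ≤ n / 2 := by
  have hterm : ∀ t ∈ range n,
      exp ((t : ℝ) * η) / (exp ((t : ℝ) * η) + exp (((n - 1 : ℕ) : ℝ) * η)) ≤ 1 / 2 := by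
    intro t ht
    have ht : (t : ℝ) ≤ (n - 1 : ℕ) := by
      exact_mod_cast Nat.le_sub_one_of_lt (mem_range.mp ht)
    exact div_add_le_half_of_le (exp_pos _).le
      (exp_le_exp.mpr (mul_le_mul_of_nonneg_right ht hη))
  calc _ ≤ (range n).card • (1 / 2 : ℝ) := sum_le_card_nsmul _ _ _ hterm
    _ = n / 2 := by rw [card_range, nsmul_eq_mul, mul_one_div]

theorem oma_negative_entropy_linear_dynamic_regret_general
    (η : ℝ) (hη : 0 < η) (T : ℕ) :
    ((∑ t ∈ Finset.range (T / 2),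
        Real.exp ((t : ℝ) * η) / (Real.exp ((t : ℝ) * η) + 1))
      + ∑ t ∈ Finset.range (T / 2),
        Real.exp ((t : ℝ) * η) / (Real.exp ((t : ℝ) * η) + Real.exp (((T / 2 - 1 : ℕ) : ℝ) * η))
      ≤ (3 / 4) * (T : ℝ))
    ∧ ((T : ℝ) / 4 ≤ (T : ℝ)
        - ((∑ t ∈ Finset.range (T / 2),
              Real.exp ((t : ℝ) * η) / (Real.exp ((t : ℝ) * η) + 1))
          + ∑ t ∈ Finset.range (T / 2),
              Real.exp ((t : ℝ) * η) / (Real.exp ((t : ℝ) * η) + Real.exp (((T / 2 - 1 : ℕ) : ℝ) * η)))) := by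
  have h₁ := sum_exp_div_exp_add_one_le η (T / 2)
  have h₂ := sum_exp_div_exp_add_exp_last_le hη.le (T / 2)
  have hhalf : ((T / 2 : ℕ) : ℝ) ≤ T / 2 := Nat.cast_div_le
  constructor <;> linarith

/-- Computational core of the paper's Proposition 9 (Appendix C): on the lower-bound
instance, the cumulated reward of negative-entropy OMA is at most `(3/4)·T`, hence the
dynamic regret `T` minus this reward is at least `T/4`. -/
theorem oma_negative_entropy_linear_dynamic_regret
    (η : ℝ) (hη : 0 < η) (T : ℕ) (hTeven : Even T) (hT2 : 2 ≤ T) :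
    ((∑ t ∈ Finset.range (T / 2),
        Real.exp ((t : ℝ) * η) / (Real.exp ((t : ℝ) * η) + 1))
      + ∑ t ∈ Finset.range (T / 2),
        Real.exp ((t : ℝ) * η) / (Real.exp ((t : ℝ) * η) + Real.exp (((T / 2 - 1 : ℕ) : ℝ) * η))
      ≤ (3 / 4) * (T : ℝ))
    ∧ ((T : ℝ) / 4 ≤ (T : ℝ)
        - ((∑ t ∈ Finset.range (T / 2),
              Real.exp ((t : ℝ) * η) / (Real.exp ((t : ℝ) * η) + 1))
          + ∑ t ∈ Finset.range (T / 2),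
              Real.exp ((t : ℝ) * η) / (Real.exp ((t : ℝ) * η) + Real.exp (((T / 2 - 1 : ℕ) : ℝ) * η)))) :=
  oma_negative_entropy_linear_dynamic_regret_general η hη T
end

section
/- Let n be a positive integer and let f̂ : ℝ^n → ℝ be continuously differentiable with f̂(0) = 0. Suppose that on the box [0,1]^n the gradient is nonnegative (∇f̂(z) ≥ 0 componentwise for all z ∈ [0,1]^n) and antitone (for z, z' ∈ [0,1]^n with z ≤ z' componentwise, ∇f̂(z') ≤ ∇f̂(z) componentwise). Then for all x, y ∈ [0,1]^n, ⟨ y − x , ∫_0^1 e^{z−1}·∇f̂(z·x) dz ⟩ ≥ (1 − 1/e)·f̂(y) − f̂(x). -/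
section Aux

variable {n : ℕ} {f : (Fin n → ℝ) → ℝ}

private lemma clm_expand (L : (Fin n → ℝ) →L[ℝ] ℝ) (v : Fin n → ℝ) :
    L v = ∑ i, v i * L (Pi.single i 1) := by
  have h : v = ∑ i, v i • (Pi.single i 1 : Fin n → ℝ) := by
    ext j; simp [Finset.sum_apply, Pi.single_apply, eq_comm]
  conv_lhs => rw [h]
  simp [map_sum, smul_eq_mul]

private lemma seg_deriv (hdiff : ContDiff ℝ 1 f) (a b : Fin n → ℝ) (t : ℝ) :
    HasDerivAt (fun t : ℝ => f (a + t • b)) (fderiv ℝ f (a + t • b) b) t := by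
  have h1 : HasDerivAt (fun t : ℝ => a + t • b) b t := by
    simpa using ((hasDerivAt_id t).smul_const b).const_add a
  exact ((hdiff.differentiable one_ne_zero _).hasFDerivAt).comp_hasDerivAt t h1

private lemma seg_cont (hdiff : ContDiff ℝ 1 f) (a b v : Fin n → ℝ) :
    Continuous (fun t : ℝ => fderiv ℝ f (a + t • b) v) :=
  ((hdiff.continuous_fderiv one_ne_zero).comp
    (continuous_const.add (continuous_id.smul continuous_const))).clm_apply continuous_const

private lemma ftc_seg (hdiff : ContDiff ℝ 1 f) (a b : Fin n → ℝ) :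
    f (a + b) - f a = ∫ t in (0:ℝ)..1, fderiv ℝ f (a + t • b) b := by
  have := intervalIntegral.integral_eq_sub_of_hasDerivAt
    (f := fun t : ℝ => f (a + t • b)) (f' := fun t : ℝ => fderiv ℝ f (a + t • b) b)
    (fun t _ => seg_deriv hdiff a b t)
    ((seg_cont hdiff a b b).intervalIntegrable 0 1)
  simp only [one_smul, zero_smul, add_zero] at this
  rw [this]

private lemma mono_box (hdiff : ContDiff ℝ 1 f)
    (hgrad_nonneg : ∀ z : Fin n → ℝ, (∀ i, z i ∈ Set.Icc (0 : ℝ) 1) →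
      ∀ i, 0 ≤ fderiv ℝ f z (Pi.single i 1))
    (u w : Fin n → ℝ) (hu : ∀ i, u i ∈ Set.Icc (0:ℝ) 1) (hw : ∀ i, w i ∈ Set.Icc (0:ℝ) 1)
    (huw : ∀ i, u i ≤ w i) : f u ≤ f w := by
  have key : f (u + (w - u)) - f u = ∫ t in (0:ℝ)..1, fderiv ℝ f (u + t • (w - u)) (w - u) :=
    ftc_seg hdiff u (w - u)
  simp only [add_sub_cancel] at key
  have hpos : 0 ≤ ∫ t in (0:ℝ)..1, fderiv ℝ f (u + t • (w - u)) (w - u) := by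
    apply intervalIntegral.integral_nonneg (by norm_num)
    intro t ht
    have hbox : ∀ i, (u + t • (w - u)) i ∈ Set.Icc (0:ℝ) 1 := by
      intro i
      have h1 : u i ≤ u i + t * (w i - u i) := by nlinarith [ht.1, huw i]
      have h2 : u i + t * (w i - u i) ≤ w i := by nlinarith [ht.2, huw i]
      exact ⟨le_trans (hu i).1 h1, le_trans h2 (hw i).2⟩
    rw [clm_expand]
    apply Finset.sum_nonneg
    intro i _
    exact mul_nonneg (by simpa using sub_nonneg.mpr (huw i)) (hgrad_nonneg _ hbox i)
  linarith

private lemma concave_dir (hdiff : ContDiff ℝ 1 f)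
    (hgrad_anti : ∀ z z' : Fin n → ℝ, (∀ i, z i ∈ Set.Icc (0 : ℝ) 1) →
      (∀ i, z' i ∈ Set.Icc (0 : ℝ) 1) → (∀ i, z i ≤ z' i) →
      ∀ i, fderiv ℝ f z' (Pi.single i 1) ≤ fderiv ℝ f z (Pi.single i 1))
    (u v : Fin n → ℝ) (hu : ∀ i, u i ∈ Set.Icc (0:ℝ) 1)
    (huv : ∀ i, (u + v) i ∈ Set.Icc (0:ℝ) 1) (hv : ∀ i, 0 ≤ v i) :
    f (u + v) - f u ≤ fderiv ℝ f u v := by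
  rw [ftc_seg hdiff u v]
  have : (fderiv ℝ f u) v = ∫ _t in (0:ℝ)..1, fderiv ℝ f u v := by simp
  rw [this]
  apply intervalIntegral.integral_mono_on (by norm_num)
    ((seg_cont hdiff u v v).intervalIntegrable 0 1)
    (intervalIntegrable_const)
  intro t ht
  have hbox : ∀ i, (u + t • v) i ∈ Set.Icc (0:ℝ) 1 := by
    intro i
    have h1 : (0:ℝ) ≤ t * v i := mul_nonneg ht.1 (hv i)
    have h2 : t * v i ≤ v i := by nlinarith [ht.2, hv i]
    constructor
    · simpa using le_trans (hu i).1 (by simpa using le_add_of_nonneg_right (a := u i) h1)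
    · have := (huv i).2
      simp only [Pi.add_apply] at this ⊢
      simp only [Pi.smul_apply, smul_eq_mul]
      linarith
  have hle : ∀ i, u i ≤ (u + t • v) i := by
    intro i
    simp only [Pi.add_apply, Pi.smul_apply, smul_eq_mul]
    exact le_add_of_nonneg_right (mul_nonneg ht.1 (hv i))
  rw [clm_expand, clm_expand]
  apply Finset.sum_le_sum
  intro i _
  exact mul_le_mul_of_nonneg_left (hgrad_anti u (u + t • v) hu hbox hle i) (hv i)

end Aux

/-- Auxiliary-function inequality for monotone DR-submodular functions (Appendix G of
the paper): `⟨y − x, ∫₀¹ e^{z−1} ∇f̂(z·x) dz⟩ ≥ (1 − 1/e)·f̂(y) − f̂(x)`. -/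
theorem auxiliary_function_inequality
    (n : ℕ) (hn : 0 < n) (f : (Fin n → ℝ) → ℝ)
    (hdiff : ContDiff ℝ 1 f) (hf0 : f 0 = 0)
    (hgrad_nonneg : ∀ z : Fin n → ℝ, (∀ i, z i ∈ Set.Icc (0 : ℝ) 1) →
      ∀ i, 0 ≤ fderiv ℝ f z (Pi.single i 1))
    (hgrad_anti : ∀ z z' : Fin n → ℝ, (∀ i, z i ∈ Set.Icc (0 : ℝ) 1) →
      (∀ i, z' i ∈ Set.Icc (0 : ℝ) 1) → (∀ i, z i ≤ z' i) →
      ∀ i, fderiv ℝ f z' (Pi.single i 1) ≤ fderiv ℝ f z (Pi.single i 1))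
    (x y : Fin n → ℝ) (hx : ∀ i, x i ∈ Set.Icc (0 : ℝ) 1)
    (hy : ∀ i, y i ∈ Set.Icc (0 : ℝ) 1) :
    (1 - 1 / Real.exp 1) * f y - f x
      ≤ ∑ i, (y i - x i) *
          ∫ z in (0 : ℝ)..1, Real.exp (z - 1) * fderiv ℝ f (z • x) (Pi.single i 1) := by
  have hDc : Continuous (fderiv ℝ f) := hdiff.continuous_fderiv one_ne_zero
  have hce : Continuous (fun z : ℝ => Real.exp (z - 1)) :=
    Real.continuous_exp.comp (continuous_id.sub continuous_const)
  have hcontD : ∀ v : Fin n → ℝ, Continuous (fun z : ℝ => fderiv ℝ f (z • x) v) := fun v =>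
    (hDc.comp (continuous_id.smul continuous_const)).clm_apply continuous_const
  have hcontf : Continuous (fun z : ℝ => f (z • x)) :=
    hdiff.continuous.comp (continuous_id.smul continuous_const)
  have hbox : ∀ z ∈ Set.Icc (0:ℝ) 1, ∀ i, (z • x) i ∈ Set.Icc (0:ℝ) 1 := by
    intro z hz i
    exact ⟨mul_nonneg hz.1 (hx i).1, mul_le_one₀ hz.2 (hx i).1 (hx i).2⟩
  -- Step A: pointwise key inequality
  have keyA : ∀ z ∈ Set.Icc (0:ℝ) 1,
      f y - f (z • x) - fderiv ℝ f (z • x) x ≤ fderiv ℝ f (z • x) (y - x) := by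
    intro z hz
    set u : Fin n → ℝ := z • x with hu
    have hub := hbox z hz
    set v : Fin n → ℝ := fun i => max (y i) (u i) - u i with hv
    have hv0 : ∀ i, 0 ≤ v i := fun i => sub_nonneg.mpr (le_max_right _ _)
    have huv : ∀ i, (u + v) i = max (y i) (u i) := fun i => by simp [hv]
    have huvbox : ∀ i, (u + v) i ∈ Set.Icc (0:ℝ) 1 := by
      intro i; rw [huv i]
      exact ⟨le_trans (hy i).1 (le_max_left _ _), max_le (hy i).2 (hub i).2⟩
    have h1 : f (u + v) - f u ≤ fderiv ℝ f u v :=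
      concave_dir hdiff hgrad_anti u v hub huvbox hv0
    have h2 : f y ≤ f (u + v) := by
      apply mono_box hdiff hgrad_nonneg y (u + v) hy huvbox
      intro i; rw [huv i]; exact le_max_left _ _
    have h3 : fderiv ℝ f u v ≤ fderiv ℝ f u y := by
      rw [clm_expand (fderiv ℝ f u) v, clm_expand (fderiv ℝ f u) y]
      apply Finset.sum_le_sum
      intro i _
      apply mul_le_mul_of_nonneg_right _ (hgrad_nonneg u hub i)
      rcases le_total (y i) (u i) with h | h
      · simp [hv, max_eq_right h, (hy i).1]
      · simp [hv, max_eq_left h]; exact (hub i).1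
    have h4 : fderiv ℝ f u (y - x) = fderiv ℝ f u y - fderiv ℝ f u x := map_sub _ _ _
    linarith
  -- Step B: rewrite the sum as a single integral
  have stepB : ∑ i, (y i - x i) *
        ∫ z in (0:ℝ)..1, Real.exp (z - 1) * fderiv ℝ f (z • x) (Pi.single i 1)
      = ∫ z in (0:ℝ)..1, Real.exp (z - 1) * fderiv ℝ f (z • x) (y - x) := by
    have h1 : ∀ i : Fin n, (y i - x i) *
          ∫ z in (0:ℝ)..1, Real.exp (z - 1) * fderiv ℝ f (z • x) (Pi.single i 1)
        = ∫ z in (0:ℝ)..1, (y i - x i) *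
            (Real.exp (z - 1) * fderiv ℝ f (z • x) (Pi.single i 1)) := fun i =>
      (intervalIntegral.integral_const_mul _ _).symm
    rw [Finset.sum_congr rfl (fun i _ => h1 i)]
    rw [← intervalIntegral.integral_finset_sum]
    · apply intervalIntegral.integral_congr
      intro z _
      beta_reduce
      rw [clm_expand (fderiv ℝ f (z • x)) (y - x), Finset.mul_sum]
      apply Finset.sum_congr rfl
      intro i _
      simp only [Pi.sub_apply]
      ring
    · intro i _
      exact (continuous_const.mul ((Real.continuous_exp.comp (continuous_id.sub
        continuous_const)).mul (hcontD (Pi.single i 1)))).intervalIntegrable 0 1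
  rw [stepB]
  -- Step D2: FTC for z ↦ exp(z-1) * f(z•x)
  have hderivφ : ∀ z : ℝ, HasDerivAt (fun z : ℝ => Real.exp (z - 1) * f (z • x))
      (Real.exp (z - 1) * f (z • x) + Real.exp (z - 1) * fderiv ℝ f (z • x) x) z := by
    intro z
    have he : HasDerivAt (fun z : ℝ => Real.exp (z - 1)) (Real.exp (z - 1)) z := by
      simpa using ((hasDerivAt_id z).sub_const 1).exp
    have hg : HasDerivAt (fun z : ℝ => f (z • x)) (fderiv ℝ f (z • x) x) z := by
      have := seg_deriv hdiff 0 x z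
      simpa using this
    simpa [mul_comm] using he.fun_mul hg
  have stepD2 : ∫ z in (0:ℝ)..1,
      (Real.exp (z - 1) * f (z • x) + Real.exp (z - 1) * fderiv ℝ f (z • x) x) = f x := by
    rw [intervalIntegral.integral_eq_sub_of_hasDerivAt (fun z _ => hderivφ z)
      (((hce.mul hcontf).add (hce.mul (hcontD x))).intervalIntegrable 0 1)]
    simp [hf0]
  -- ∫ exp(z-1) = 1 - exp(-1)
  have hexpint : ∫ z in (0:ℝ)..1, Real.exp (z - 1) = 1 - Real.exp (-1) := by
    rw [intervalIntegral.integral_comp_sub_right (fun z => Real.exp z) 1]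
    simp [integral_exp]
  -- Step C: monotonicity of the integral
  have stepC : ∫ z in (0:ℝ)..1,
        Real.exp (z - 1) * (f y - f (z • x) - fderiv ℝ f (z • x) x)
      ≤ ∫ z in (0:ℝ)..1, Real.exp (z - 1) * fderiv ℝ f (z • x) (y - x) := by
    apply intervalIntegral.integral_mono_on (by norm_num)
    · exact (hce.mul
        ((continuous_const.sub hcontf).sub (hcontD x))).intervalIntegrable 0 1
    · exact (hce.mul
        (hcontD (y - x))).intervalIntegrable 0 1
    · intro z hz
      exact mul_le_mul_of_nonneg_left (keyA z hz) (Real.exp_nonneg _)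
  -- compute left integral of stepC
  have hLHS : ∫ z in (0:ℝ)..1,
        Real.exp (z - 1) * (f y - f (z • x) - fderiv ℝ f (z • x) x)
      = (1 - Real.exp (-1)) * f y - f x := by
    have hr : ∀ z : ℝ, Real.exp (z - 1) * (f y - f (z • x) - fderiv ℝ f (z • x) x)
        = Real.exp (z - 1) * f y - (Real.exp (z - 1) * f (z • x)
            + Real.exp (z - 1) * fderiv ℝ f (z • x) x) := fun z => by ring
    simp only [hr]
    rw [intervalIntegral.integral_sub, intervalIntegral.integral_mul_const, hexpint, stepD2]
    · exact (hce.mul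
        continuous_const).intervalIntegrable 0 1
    · exact ((hce.mul hcontf).add
        (hce.mul
          (hcontD x))).intervalIntegrable 0 1
  rw [hLHS] at stepC
  have : Real.exp (-1) = 1 / Real.exp 1 := by
    rw [Real.exp_neg]; ring
  rw [this] at stepC
  linarith
end

section
/- Let E be a real inner product space, let Φ : E → ℝ be differentiable and convex, and define the Bregman divergence D_Φ(a, b) = Φ(a) − Φ(b) − ⟨∇Φ(b), a − b⟩. Let T be a positive integer, let y*_1,…,y*_{T+1} ∈ E and y^π_0, y^π_1,…,y^π_T ∈ E, and let D, L ≥ 0 be constants such that D_Φ(y*_1, y^π_0) ≤ D², and ‖∇Φ(y*_{t+1})‖ ≤ L and ‖∇Φ(y^π_t)‖ ≤ L for every t ∈ {1,…,T}. Then Σ_{t=1}^{T} ( D_Φ(y*_t, y^π_{t−1}) − D_Φ(y*_t, y^π_t) ) ≤ D² + 2L·Σ_{t=1}^{T} ‖y*_{t+1} − y*_t‖. -/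
/-!
Each summand is `D_Φ(y*ₜ, y^π_{t-1}) - D_Φ(y*ₜ, y^π_t)`. Regrouping the sum as
`D_Φ(y*₁, y^π₀) - D_Φ(y*_{T+1}, y^π_T) + ∑ₜ (D_Φ(y*_{t+1}, y^π_t) - D_Φ(y*ₜ, y^π_t))`, the first
term is at most `D²`, the second is nonpositive, and each remaining difference shares its base
point, so it equals `⟪∇Φ(y*_{t+1}) - ∇Φ(y^π_t), y*_{t+1} - y*ₜ⟫ - D_Φ(y*ₜ, y*_{t+1})`, which
Cauchy–Schwarz bounds by `2L ‖y*_{t+1} - y*ₜ‖`.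
-/

open scoped RealInnerProductSpace
open Finset InnerProductSpace

theorem Finset.sum_range_sub_eq_sub_add_sum {M : Type*} [AddCommGroup M] (f g : ℕ → M) (n : ℕ) :
    ∑ i ∈ range n, (f i - g i) = f 0 - f n + ∑ i ∈ range n, (f (i + 1) - g i) := by
  rw [← sum_range_sub' f n, ← sum_add_distrib]
  congr 1 with i
  abel

theorem ConvexOn.apply_sub_le_sub_of_hasFDerivAt {E : Type*} [NormedAddCommGroup E]
    [NormedSpace ℝ E] {s : Set E} {f : E → ℝ} {f' : E →L[ℝ] ℝ} {x y : E}
    (hf : ConvexOn ℝ s f) (hx : x ∈ s) (hy : y ∈ s) (hf' : HasFDerivAt f f' x) :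
    f' (y - x) ≤ f y - f x := by
  set ℓ : ℝ →ᵃ[ℝ] E := AffineMap.lineMap x y
  have hderiv : HasDerivAt (f ∘ ℓ) (f' (y - x)) 0 := by
    simpa using hf'.comp_hasDerivAt_of_eq 0 AffineMap.hasDerivAt_lineMap (by simp)
  simpa [ℓ, slope] using (hf.comp_affineMap ℓ).le_slope_of_hasDerivAt (x := 0) (y := 1)
    (by simpa [ℓ] using hx) (by simpa [ℓ] using hy) one_pos hderiv

section Bregman

variable {E : Type*} [NormedAddCommGroup E] [InnerProductSpace ℝ E] {Φ : E → ℝ} {gΦ : E → E}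

variable (Φ gΦ) in
def bregmanDiv (a b : E) : ℝ := Φ a - Φ b - ⟪gΦ b, a - b⟫

theorem bregmanDiv_nonneg {s : Set E} (hΦ : ConvexOn ℝ s Φ) {a b : E} (ha : a ∈ s) (hb : b ∈ s)
    (hΦb : HasFDerivAt Φ (toDualMap ℝ E (gΦ b)) b) : 0 ≤ bregmanDiv Φ gΦ a b :=
  sub_nonneg.2 (hΦ.apply_sub_le_sub_of_hasFDerivAt hb ha hΦb)

theorem bregmanDiv_sub_bregmanDiv (a b c : E) :
    bregmanDiv Φ gΦ a c - bregmanDiv Φ gΦ b c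
      = ⟪gΦ a - gΦ c, a - b⟫ - bregmanDiv Φ gΦ b a := by
  have hba : b - a = -(a - b) := (neg_sub a b).symm
  simp only [bregmanDiv, inner_sub_left, inner_sub_right, hba, inner_neg_right]
  ring

theorem bregmanDiv_sub_bregmanDiv_le {s : Set E} (hΦ : ConvexOn ℝ s Φ) {a b c : E} {L : ℝ}
    (ha : a ∈ s) (hb : b ∈ s) (hΦa : HasFDerivAt Φ (toDualMap ℝ E (gΦ a)) a)
    (hLa : ‖gΦ a‖ ≤ L) (hLc : ‖gΦ c‖ ≤ L) :
    bregmanDiv Φ gΦ a c - bregmanDiv Φ gΦ b c ≤ 2 * L * ‖a - b‖ := by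
  rw [bregmanDiv_sub_bregmanDiv]
  have hba : 0 ≤ bregmanDiv Φ gΦ b a := bregmanDiv_nonneg hΦ hb ha hΦa
  calc ⟪gΦ a - gΦ c, a - b⟫ - bregmanDiv Φ gΦ b a
      ≤ ‖gΦ a - gΦ c‖ * ‖a - b‖ := by linarith [real_inner_le_norm (gΦ a - gΦ c) (a - b)]
    _ ≤ (‖gΦ a‖ + ‖gΦ c‖) * ‖a - b‖ := by gcongr; exact norm_sub_le _ _
    _ ≤ 2 * L * ‖a - b‖ := by gcongr; linarith

end Bregman

theorem bregman_telescoping_bound_general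
    (E : Type*) [NormedAddCommGroup E] [InnerProductSpace ℝ E]
    (Φ : E → ℝ) (gΦ : E → E)
    (hΦdiff : ∀ x, HasFDerivAt Φ ((InnerProductSpace.toDualMap ℝ E (gΦ x) :
        StrongDual ℝ E) : E →L[ℝ] ℝ) x)
    (hΦconv : ConvexOn ℝ Set.univ Φ)
    (T : ℕ)
    (ystar : ℕ → E) (ypi : ℕ → E)
    (D L : ℝ)
    (hinit : Φ (ystar 1) - Φ (ypi 0) - ⟪gΦ (ypi 0), ystar 1 - ypi 0⟫ ≤ D ^ 2)
    (hgrad_ystar : ∀ t, 1 ≤ t → t ≤ T → ‖gΦ (ystar (t + 1))‖ ≤ L)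
    (hgrad_ypi : ∀ t, 1 ≤ t → t ≤ T → ‖gΦ (ypi t)‖ ≤ L) :
    ∑ t ∈ Finset.range T,
        ((Φ (ystar (t + 1)) - Φ (ypi t) - ⟪gΦ (ypi t), ystar (t + 1) - ypi t⟫)
          - (Φ (ystar (t + 1)) - Φ (ypi (t + 1))
              - ⟪gΦ (ypi (t + 1)), ystar (t + 1) - ypi (t + 1)⟫))
      ≤ D ^ 2 + 2 * L * ∑ t ∈ Finset.range T, ‖ystar (t + 2) - ystar (t + 1)‖ := by
  have hlast : 0 ≤ bregmanDiv Φ gΦ (ystar (T + 1)) (ypi T) :=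
    bregmanDiv_nonneg hΦconv trivial trivial (hΦdiff _)
  have hstep : ∀ t ∈ range T,
      bregmanDiv Φ gΦ (ystar (t + 2)) (ypi (t + 1)) - bregmanDiv Φ gΦ (ystar (t + 1)) (ypi (t + 1))
        ≤ 2 * L * ‖ystar (t + 2) - ystar (t + 1)‖ := fun t ht => by
    have ht : t + 1 ≤ T := mem_range.1 ht
    exact bregmanDiv_sub_bregmanDiv_le hΦconv trivial trivial (hΦdiff _)
      (hgrad_ystar (t + 1) le_add_self ht) (hgrad_ypi (t + 1) le_add_self ht)
  calc _ = bregmanDiv Φ gΦ (ystar 1) (ypi 0) - bregmanDiv Φ gΦ (ystar (T + 1)) (ypi T)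
        + ∑ t ∈ range T, (bregmanDiv Φ gΦ (ystar (t + 2)) (ypi (t + 1))
          - bregmanDiv Φ gΦ (ystar (t + 1)) (ypi (t + 1))) :=
        sum_range_sub_eq_sub_add_sum (fun t => bregmanDiv Φ gΦ (ystar (t + 1)) (ypi t))
          (fun t => bregmanDiv Φ gΦ (ystar (t + 1)) (ypi (t + 1))) T
    _ ≤ D ^ 2 - 0 + ∑ t ∈ range T, 2 * L * ‖ystar (t + 2) - ystar (t + 1)‖ := by
        gcongr with t ht
        · exact hinit
        · exact hstep t ht
    _ = _ := by rw [mul_sum, sub_zero]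

/-- Telescoping Bregman-divergence bound (key step in the proof of the paper's
Theorem 7): the accumulated divergence drift of optimistic OMA against a dynamic
comparator is controlled by `D² + 2L·(path length)`. Here `gΦ x` is the gradient of
`Φ` at `x`, expressed via the Riesz map. -/
theorem bregman_telescoping_bound
    (E : Type*) [NormedAddCommGroup E] [InnerProductSpace ℝ E]
    (Φ : E → ℝ) (gΦ : E → E)
    (hΦdiff : ∀ x, HasFDerivAt Φ ((InnerProductSpace.toDualMap ℝ E (gΦ x) :
        StrongDual ℝ E) : E →L[ℝ] ℝ) x)
    (hΦconv : ConvexOn ℝ Set.univ Φ)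
    (T : ℕ) (hT : 0 < T)
    (ystar : ℕ → E) (ypi : ℕ → E)
    (D L : ℝ) (hD : 0 ≤ D) (hL : 0 ≤ L)
    (hinit : Φ (ystar 1) - Φ (ypi 0) - ⟪gΦ (ypi 0), ystar 1 - ypi 0⟫ ≤ D ^ 2)
    (hgrad_ystar : ∀ t, 1 ≤ t → t ≤ T → ‖gΦ (ystar (t + 1))‖ ≤ L)
    (hgrad_ypi : ∀ t, 1 ≤ t → t ≤ T → ‖gΦ (ypi t)‖ ≤ L) :
    ∑ t ∈ Finset.range T,
        ((Φ (ystar (t + 1)) - Φ (ypi t) - ⟪gΦ (ypi t), ystar (t + 1) - ypi t⟫)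
          - (Φ (ystar (t + 1)) - Φ (ypi (t + 1))
              - ⟪gΦ (ypi (t + 1)), ystar (t + 1) - ypi (t + 1)⟫))
      ≤ D ^ 2 + 2 * L * ∑ t ∈ Finset.range T, ‖ystar (t + 2) - ystar (t + 1)‖ :=
  bregman_telescoping_bound_general E Φ gΦ hΦdiff hΦconv T ystar ypi D L hinit hgrad_ystar hgrad_ypi
end

section
/- Let (Ω, F, μ) be a probability space, let n be a positive integer, and let x_1,…,x_n : Ω → {0,1} be random variables with expectations E[x_i] = y_i. Suppose that for every subset S ⊆ {1,…,n}, E[ Π_{i∈S} (1 − x_i) ] ≤ Π_{i∈S} (1 − y_i). Then for every vector of weights w ∈ [0,1]^n and every subset S ⊆ {1,…,n}, E[ Π_{i∈S} (1 + w_i − x_i) ] ≤ Π_{i∈S} (1 + w_i − y_i). -/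
open MeasureTheory

/-! Expanding `∏ i ∈ S, (f i + w i)` over the subsets `t ⊆ S` writes it as a combination of the
products `∏ i ∈ t, f i` with the nonnegative coefficients `∏ i ∈ S \ t, w i`, so an upper bound on
the expectations of those products passes to the shifted product term by term. -/

theorem integral_prod_add_const_le {Ω ι : Type*} [MeasurableSpace Ω] [DecidableEq ι]
    {μ : Measure Ω} {f : ι → Ω → ℝ} {g w : ι → ℝ} {S : Finset ι}
    (hint : ∀ t ⊆ S, Integrable (fun ω => ∏ i ∈ t, f i ω) μ)
    (hle : ∀ t ⊆ S, ∫ ω, ∏ i ∈ t, f i ω ∂μ ≤ ∏ i ∈ t, g i)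
    (hw : ∀ i ∈ S, 0 ≤ w i) :
    ∫ ω, ∏ i ∈ S, (f i ω + w i) ∂μ ≤ ∏ i ∈ S, (g i + w i) := by
  simp_rw [Finset.prod_add]
  rw [integral_finsetSum _ fun t ht => (hint t (Finset.mem_powerset.1 ht)).mul_const _]
  refine Finset.sum_le_sum fun t ht => ?_
  rw [integral_mul_const]
  exact mul_le_mul_of_nonneg_right (hle t (Finset.mem_powerset.1 ht))
    (Finset.prod_nonneg fun i hi => hw i (Finset.sdiff_subset hi))

theorem integrable_prod_of_abs_le_one {Ω ι : Type*} [MeasurableSpace Ω] {μ : Measure Ω}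
    [IsFiniteMeasure μ] {f : ι → Ω → ℝ} (hf : ∀ i, Measurable (f i))
    (hbound : ∀ i ω, |f i ω| ≤ 1) (t : Finset ι) :
    Integrable (fun ω => ∏ i ∈ t, f i ω) μ := by
  refine .of_bound (Finset.measurable_prod t fun i _ => hf i).aestronglyMeasurable 1
    (.of_forall fun ω => ?_)
  rw [Real.norm_eq_abs, Finset.abs_prod]
  exact Finset.prod_le_one (fun i _ => abs_nonneg _) fun i _ => hbound i ω

theorem weighted_negative_correlation_shifted_general
    (Ω : Type*) [MeasurableSpace Ω] (μ : Measure Ω) [IsProbabilityMeasure μ]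
    (n : ℕ)
    (x : Fin n → Ω → ℝ) (hmeas : ∀ i, Measurable (x i))
    (hbin : ∀ i ω, x i ω = 0 ∨ x i ω = 1)
    (y : Fin n → ℝ)
    (hneg : ∀ S : Finset (Fin n),
      (∫ ω, ∏ i ∈ S, (1 - x i ω) ∂μ) ≤ ∏ i ∈ S, (1 - y i))
    (w : Fin n → ℝ) (hw : ∀ i, w i ∈ Set.Icc (0 : ℝ) 1)
    (S : Finset (Fin n)) :
    (∫ ω, ∏ i ∈ S, (1 + w i - x i ω) ∂μ) ≤ ∏ i ∈ S, (1 + w i - y i) := by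
  have hbound : ∀ i ω, |1 - x i ω| ≤ 1 := fun i ω => by
    rcases hbin i ω with h | h <;> norm_num [h]
  have hint := integrable_prod_of_abs_le_one (μ := μ)
    (f := fun i ω => 1 - x i ω) (fun i => measurable_const.sub (hmeas i)) hbound
  simp_rw [add_sub_right_comm]
  exact integral_prod_add_const_le (fun t _ => hint t) (fun t _ => hneg t) fun i _ => (hw i).1

/-- Second inequality of the weighted negative-correlation lemma (Appendix E of the
paper): the shifted variables `1 + w i - x i` also satisfy the product-expectation
inequality. -/
theorem weighted_negative_correlation_shifted
    (Ω : Type*) [MeasurableSpace Ω] (μ : Measure Ω) [IsProbabilityMeasure μ]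
    (n : ℕ) (hn : 0 < n)
    (x : Fin n → Ω → ℝ) (hmeas : ∀ i, Measurable (x i))
    (hbin : ∀ i ω, x i ω = 0 ∨ x i ω = 1)
    (y : Fin n → ℝ) (hy : ∀ i, (∫ ω, x i ω ∂μ) = y i)
    (hneg : ∀ S : Finset (Fin n),
      (∫ ω, ∏ i ∈ S, (1 - x i ω) ∂μ) ≤ ∏ i ∈ S, (1 - y i))
    (w : Fin n → ℝ) (hw : ∀ i, w i ∈ Set.Icc (0 : ℝ) 1)
    (S : Finset (Fin n)) :
    (∫ ω, ∏ i ∈ S, (1 + w i - x i ω) ∂μ) ≤ ∏ i ∈ S, (1 + w i - y i) :=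
  weighted_negative_correlation_shifted_general Ω μ n x hmeas hbin y hneg w hw S
end
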